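/- Let z achieve block sensitivity k with disjoint sensitive blocks B₁,…,B_k and let a path query distinct coordinates i₁,…,i_ℓ (the path of z in a correct decision tree) that hits every block. Define, for r = 1,…,ℓ, q_r = (|A_r|/k)·(1/|A_r|) if i_r ∈ ⋃_{j∈A_r} B_j and q_r = 0 otherwise, where A_r = {j : B_j ∩ {i₁,…,i_{r−1}} = ∅}. Then exactly k of the values q_r are nonzero, each nonzero q_r equals 1/k, and ∑_{r=1}^ℓ r·q_r ≥ (k+1)/2. -/
import Mathlib


/-- Flip the coordinates of `z` in `B`. -/
def flipOn {n : ℕ} (z : Fin n → Bool) (B : Finset (Fin n)) : Fin n → Bool :=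
  fun i => if i ∈ B then !(z i) else z i

/-- Sum of a finset of naturals of cardinality `k` is at least `0 + 1 + ⋯ + (k-1)`. -/
lemma aux_sum_range_card_le : ∀ (k : ℕ) (s : Finset ℕ), s.card = k →
    ∑ m ∈ Finset.range k, m ≤ ∑ x ∈ s, x := by
  intro k
  induction k with
  | zero => intro s h; simp
  | succ k ih =>
    intro s h
    have hne : s.Nonempty := Finset.card_pos.mp (by omega)
    set M := s.max' hne with hMdef
    have hM : M ∈ s := s.max'_mem hne
    have herase : (s.erase M).card = k := by simp [Finset.card_erase_of_mem hM, h]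
    have hle : k ≤ M := by
      have hsub : s ⊆ Finset.range (M + 1) := fun x hx =>
        Finset.mem_range.mpr (Nat.lt_succ_of_le (s.le_max' x hx))
      have := Finset.card_le_card hsub
      rw [Finset.card_range, h] at this; omega
    calc ∑ m ∈ Finset.range (k + 1), m = (∑ m ∈ Finset.range k, m) + k :=
          Finset.sum_range_succ _ _
      _ ≤ (∑ x ∈ s.erase M, x) + M := Nat.add_le_add (ih _ herase) hle
      _ = ∑ x ∈ s, x := Finset.sum_erase_add s _ hM

/-- With disjoint nonempty sensitive blocks `B₁,…,B_k` of `z` and distinct queried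
coordinates `i₁,…,i_ℓ` hitting every block, letting `A_r` be the active set before step
`r` and `q_r = (|A_r|/k)·(1/|A_r|)` at hit steps and `0` otherwise, exactly `k` of the
`q_r` are nonzero, each nonzero `q_r` equals `1/k`, and `∑ r·q_r ≥ (k+1)/2`. -/
theorem stmt_15 {n k ℓ : ℕ} (hk : 1 ≤ k) (z : Fin n → Bool)
    (B : Fin k → Finset (Fin n))
    (hdisj : Pairwise (Function.onFun Disjoint B))
    (hne : ∀ j, (B j).Nonempty)
    (i : Fin ℓ → Fin n) (hi : Function.Injective i)
    (hhit : ∀ j : Fin k, ∃ r : Fin ℓ, i r ∈ B j)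
    (A : Fin ℓ → Finset (Fin k))
    (hA : ∀ r, A r = Finset.univ.filter fun j => ∀ s : Fin ℓ, (s : ℕ) < (r : ℕ) → i s ∉ B j)
    (q : Fin ℓ → ℚ)
    (hq : ∀ r, q r = if ∃ j ∈ A r, i r ∈ B j
      then (((A r).card : ℚ) / k) * (1 / ((A r).card : ℚ)) else 0) :
    (Finset.univ.filter fun r => q r ≠ 0).card = k ∧
    (∀ r, q r ≠ 0 → q r = 1 / k) ∧
    ((k : ℚ) + 1) / 2 ≤ ∑ r : Fin ℓ, ((r : ℕ) + 1 : ℚ) * q r := by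
  classical
  -- first-hit time of each block
  have hS : ∀ j : Fin k, (Finset.univ.filter fun r => i r ∈ B j).Nonempty := by
    intro j; obtain ⟨r, hr⟩ := hhit j
    exact ⟨r, by simp [hr]⟩
  set f : Fin k → Fin ℓ := fun j => (Finset.univ.filter fun r => i r ∈ B j).min' (hS j)
    with hfdef
  have hfmem : ∀ j, i (f j) ∈ B j := by
    intro j
    have := Finset.min'_mem _ (hS j)
    simpa using this
  have hfmin : ∀ j (s : Fin ℓ), i s ∈ B j → f j ≤ s := by
    intro j s hs
    exact Finset.min'_le _ _ (by simp [hs])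
  have hjA : ∀ j, j ∈ A (f j) := by
    intro j
    rw [hA]
    simp only [Finset.mem_filter, Finset.mem_univ, true_and]
    intro s hs hsB
    have h1 := hfmin j s hsB
    rw [Fin.le_def] at h1
    omega
  have hkQ : (k : ℚ) ≠ 0 := by positivity
  have hval : ∀ j, q (f j) = 1 / k := by
    intro j
    rw [hq, if_pos ⟨j, hjA j, hfmem j⟩]
    have hc : ((A (f j)).card : ℚ) ≠ 0 := by
      have : (A (f j)).card ≠ 0 := Finset.card_ne_zero_of_mem (hjA j)
      exact_mod_cast this
    field_simp
  have hfinj : Function.Injective f := by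
    intro j1 j2 hf12
    by_contra hne12
    have hd := hdisj hne12
    have h1 := hfmem j1
    have h2 := hfmem j2
    rw [hf12] at h1
    exact (Finset.disjoint_left.mp hd) h1 h2
  have hq_ne : ∀ r, q r ≠ 0 ↔ ∃ j, f j = r := by
    intro r
    constructor
    · intro hr
      rw [hq] at hr
      by_cases hcond : ∃ j ∈ A r, i r ∈ B j
      · obtain ⟨j, hjAr, hjB⟩ := hcond
        refine ⟨j, ?_⟩
        have h1 := hfmin j r hjB
        rw [hA] at hjAr
        simp only [Finset.mem_filter, Finset.mem_univ, true_and] at hjAr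
        have h2 : ¬ ((f j : ℕ) < (r : ℕ)) := fun hlt => hjAr (f j) hlt (hfmem j)
        rw [Fin.le_def] at h1
        exact Fin.ext (by omega)
      · rw [if_neg hcond] at hr; exact absurd rfl hr
    · rintro ⟨j, rfl⟩
      rw [hval j]
      positivity
  have himg : (Finset.univ.filter fun r => q r ≠ 0) = Finset.univ.image f := by
    ext r
    simp only [Finset.mem_filter, Finset.mem_univ, true_and, Finset.mem_image]
    rw [hq_ne r]
  have hcard : (Finset.univ.filter fun r => q r ≠ 0).card = k := by
    rw [himg, Finset.card_image_of_injective _ hfinj, Finset.card_univ, Fintype.card_fin]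
  refine ⟨hcard, ?_, ?_⟩
  · intro r hr
    obtain ⟨j, rfl⟩ := (hq_ne r).mp hr
    exact hval j
  · -- the sum bound
    have hsum1 : ∑ r : Fin ℓ, ((r : ℕ) + 1 : ℚ) * q r
        = ∑ r ∈ Finset.univ.filter (fun r => q r ≠ 0), ((r : ℕ) + 1 : ℚ) * q r := by
      rw [Finset.sum_filter]
      refine Finset.sum_congr rfl fun r _ => ?_
      by_cases hr : q r = 0 <;> simp [hr]
    have hsum2 : ∑ r ∈ Finset.univ.filter (fun r => q r ≠ 0), ((r : ℕ) + 1 : ℚ) * q r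
        = ∑ j : Fin k, ((f j : ℕ) + 1 : ℚ) * (1 / k) := by
      rw [himg, Finset.sum_image (fun a _ b _ h => hfinj h)]
      exact Finset.sum_congr rfl fun j _ => by rw [hval j]
    -- natural-number bound on ∑ (f j)
    set T : Finset ℕ := Finset.univ.image (fun j : Fin k => (f j : ℕ)) with hT
    have hTcard : T.card = k := by
      rw [hT, Finset.card_image_of_injective _ (fun a b h => hfinj (Fin.val_injective h)),
        Finset.card_univ, Fintype.card_fin]
    have hTsum : ∑ x ∈ T, x = ∑ j : Fin k, (f j : ℕ) := by
      rw [hT, Finset.sum_image (fun a _ b _ h => hfinj (Fin.val_injective h))]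
    have hlow : ∑ m ∈ Finset.range k, m ≤ ∑ j : Fin k, (f j : ℕ) := by
      rw [← hTsum]; exact aux_sum_range_card_le k T hTcard
    have hgauss : (∑ m ∈ Finset.range k, m) * 2 = k * (k - 1) := Finset.sum_range_id_mul_two k
    set S : ℕ := ∑ j : Fin k, (f j : ℕ) with hSdef
    have hnat : k * (k + 1) ≤ 2 * (S + k) := by
      have h1 : k * (k - 1) ≤ S * 2 := hgauss ▸ Nat.mul_le_mul_right 2 hlow
      have h2 : k * (k + 1) = k * (k - 1) + 2 * k := by
        cases k with
        | zero => omega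
        | succ m => simp [Nat.succ_sub_one]; ring
      omega
    rw [hsum1, hsum2]
    have hcast : ∑ j : Fin k, ((f j : ℕ) + 1 : ℚ) * (1 / k) = ((S : ℚ) + k) / k := by
      rw [← Finset.sum_mul]
      push_cast [hSdef]
      rw [Finset.sum_add_distrib]
      simp [Finset.card_univ, mul_one_div]
      ring
    rw [hcast]
    rw [div_le_div_iff₀ (by norm_num) (by positivity : (0:ℚ) < k)]
    have : ((k : ℚ) * (k + 1)) ≤ 2 * ((S : ℚ) + k) := by exact_mod_cast hnat
    linarith
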